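/- (Classical Path-representation Formula) Let Ω be a slice-open set in W, let f : Ω → ℝ^{2n} be weak slice regular, let γ ∈ 𝒫(ℂ^d, Ω), and let I, J₁, J₂ ∈ 𝒞(γ, Ω) with J₁ − J₂ invertible in End(ℝ^{2n}). Then for every t ∈ [0,1]: f(γ^I(t)) = (I − J₂)( (J₁ − J₂)⁻¹( f(γ^{J₁}(t)) ) ) − (I − J₁)( (J₁ − J₂)⁻¹( f(γ^{J₂}(t)) ) ). -/

import Mathlib

noncomputable section

/-- `ℝ^{2n}` as a Euclidean space. -/
abbrev V (n : ℕ) : Type := EuclideanSpace ℝ (Fin (2 * n))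

/-- `End(ℝ^{2n})`: the (continuous, hence in finite dimension all) real-linear
endomorphisms of `ℝ^{2n}`; multiplication is composition. -/
abbrev EndE (n : ℕ) : Type := V n →L[ℝ] V n

/-- The set `𝔠_n` of complex structures on `ℝ^{2n}`. -/
def CS (n : ℕ) : Set (EndE n) := {I | I * I = -1}

/-- The slice `ℂ_I = {x·id + y·I : x, y ∈ ℝ}`. -/
def CI {n : ℕ} (I : EndE n) : Set (EndE n) := {A | ∃ x y : ℝ, A = x • (1 : EndE n) + y • I}

/-- The slice `ℂ_I^d ⊆ [End(ℝ^{2n})]^d`. -/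
def CId (n d : ℕ) (I : EndE n) : Set (Fin d → EndE n) := {q | ∀ ℓ, q ℓ ∈ CI I}

/-- `ℝ^d` identified with the tuples `(x₁·id, …, x_d·id)`. -/
def RealSet (n d : ℕ) : Set (Fin d → EndE n) := {q | ∀ ℓ, ∃ x : ℝ, q ℓ = x • (1 : EndE n)}

/-- The weak slice-cone `W = ⋃_{I ∈ 𝒞} ℂ_I^d`. -/
def Wcone (n d : ℕ) (𝒞 : Set (EndE n)) : Set (Fin d → EndE n) := ⋃ I ∈ 𝒞, CId n d I

/-- `Ω` is slice-open: `Ω ⊆ W` and for every `I ∈ 𝒞`, `Ω ∩ ℂ_I^d` is open in the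
Euclidean (subspace) topology of `ℂ_I^d`. -/
def SliceOpen (n d : ℕ) (𝒞 : Set (EndE n)) (Ω : Set (Fin d → EndE n)) : Prop :=
  Ω ⊆ Wcone n d 𝒞 ∧ ∀ I ∈ 𝒞, ∃ U : Set (Fin d → EndE n), IsOpen U ∧ Ω ∩ CId n d I = U ∩ CId n d I

/-- The slice topology `τ_s`: a set is open iff its intersection with each slice `ℂ_I^d`
(`I ∈ 𝒞`) is open in the Euclidean topology of the slice. -/
def sliceTop (n d : ℕ) (𝒞 : Set (EndE n)) : TopologicalSpace (Fin d → EndE n) :=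
  ⨆ I ∈ 𝒞, TopologicalSpace.coinduced (Subtype.val : CId n d I → Fin d → EndE n) inferInstance

/-- A slice-domain: a nonempty slice-open set, connected in the slice topology. -/
def SliceDomain (n d : ℕ) (𝒞 : Set (EndE n)) (Ω : Set (Fin d → EndE n)) : Prop :=
  SliceOpen n d 𝒞 Ω ∧ @IsConnected _ (sliceTop n d 𝒞) Ω

/-- `Ω` is real-connected: `Ω ∩ ℝ^d` is connected (empty counts as connected). -/
def RealConnected (n d : ℕ) (Ω : Set (Fin d → EndE n)) : Prop :=
  IsPreconnected (Ω ∩ RealSet n d)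

/-- Φ_I : ℝ^d × ℝ^d → [End(ℝ^{2n})]^d, (x, y) ↦ (x₁·id + y₁·I, …, x_d·id + y_d·I). -/
def Phi (n d : ℕ) (I : EndE n) : (Fin d → ℝ) × (Fin d → ℝ) → Fin d → EndE n :=
  fun p ℓ => p.1 ℓ • (1 : EndE n) + p.2 ℓ • I

/-- The standard basis direction in the x-coordinates. -/
def ex (d : ℕ) (ℓ : Fin d) : (Fin d → ℝ) × (Fin d → ℝ) := (Pi.single ℓ 1, 0)

/-- The standard basis direction in the y-coordinates. -/
def ey (d : ℕ) (ℓ : Fin d) : (Fin d → ℝ) × (Fin d → ℝ) := (0, Pi.single ℓ 1)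

/-- f is weak slice regular on Ω: for every I ∈ 𝒞, f ∘ Φ_I is (Fréchet, real)
differentiable on Φ_I⁻¹(Ω) and satisfies the Cauchy–Riemann equations
∂(f∘Φ_I)/∂x_ℓ + I(∂(f∘Φ_I)/∂y_ℓ) = 0 there, for ℓ = 1, …, d. -/
def WSRegular (n d : ℕ) (𝒞 : Set (EndE n)) (Ω : Set (Fin d → EndE n))
    (f : (Fin d → EndE n) → V n) : Prop :=
  ∀ I ∈ 𝒞, DifferentiableOn ℝ (f ∘ Phi n d I) (Phi n d I ⁻¹' Ω) ∧
    ∀ p ∈ Phi n d I ⁻¹' Ω, ∀ ℓ : Fin d,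
      fderiv ℝ (f ∘ Phi n d I) p (ex d ℓ) + I (fderiv ℝ (f ∘ Phi n d I) p (ey d ℓ)) = 0

/-- Ψ_I : ℂ^d → ℂ_I^d, defined componentwise by x + y i ↦ x·id + y·I. -/
def Psi (n d : ℕ) (I : EndE n) : (Fin d → ℂ) → Fin d → EndE n :=
  fun z ℓ => (z ℓ).re • (1 : EndE n) + (z ℓ).im • I

/-- γ belongs to 𝒫(ℂ^d): γ is a continuous path on [0,1] in ℂ^d with real initial
point. -/
def IsPath0 (d : ℕ) (γ : ℝ → Fin d → ℂ) : Prop :=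
  ContinuousOn γ (Set.Icc 0 1) ∧ ∀ ℓ, (γ 0 ℓ).im = 0

/-- 𝒞(γ, Ω): the set of I ∈ 𝒞 with γ^I([0,1]) ⊆ Ω, where γ^I = Ψ_I ∘ γ. -/
def CPath (n d : ℕ) (𝒞 : Set (EndE n)) (Ω : Set (Fin d → EndE n))
    (γ : ℝ → Fin d → ℂ) : Set (EndE n) :=
  {I ∈ 𝒞 | ∀ t ∈ Set.Icc (0:ℝ) 1, Psi n d I (γ t) ∈ Ω}

/-- γ ∈ 𝒫(ℂ^d, Ω): γ ∈ 𝒫(ℂ^d) and γ^I([0,1]) ⊆ Ω for some I ∈ 𝒞. -/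
def PathIn (n d : ℕ) (𝒞 : Set (EndE n)) (Ω : Set (Fin d → EndE n))
    (γ : ℝ → Fin d → ℂ) : Prop :=
  IsPath0 d γ ∧ (CPath n d 𝒞 Ω γ).Nonempty

/-!
Write `f_K = f ∘ Φ_K`. With `B = (J₁ - J₂)⁻¹`, `b = B (f_{J₁} - f_{J₂})` and `a = f_{J₁} - J₁ b`
one has `f_J = a + J b` for `J = J₁, J₂`. Subtracting the Cauchy–Riemann systems of these two
slices and cancelling the invertible `J₁ - J₂` gives `∂ₓa = ∂ᵧb`, `∂ᵧa = -∂ₓb`, so `a + I b`,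
which is the right-hand side of the formula, is `I`-holomorphic, like `f_I`; the two agree on
`ℝ^d`, where all slices meet. Pairing their difference with a real functional complexified along
`I` gives a holomorphic function on an open subset of `ℂ^d` vanishing at real points. On complex
lines the one-variable identity theorem applies: the function vanishes near `γ(0)`, hence on the
connected component of the domain containing the path.
-/
open Filter Topology Metric Set

theorem Complex.frequently_im_eq_zero_nhdsNE : ∃ᶠ c in 𝓝[≠] (0 : ℂ), c.im = 0 := by
  have h : Tendsto ((↑) : ℝ → ℂ) (𝓝[≠] 0) (𝓝[≠] 0) := by
    simpa using Complex.continuous_ofReal.continuousWithinAt.tendsto_nhdsWithin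
      (x := (0:ℝ)) (t := {(0:ℂ)}ᶜ) (fun s hs => by simpa using hs)
  exact h.frequently (Frequently.of_forall fun s => Complex.ofReal_im s)

section IdentityPrinciple

variable {E F : Type*} [NormedAddCommGroup E] [NormedSpace ℂ E]
  [NormedAddCommGroup F] [NormedSpace ℂ F] [CompleteSpace F] {G : E → F}

theorem DifferentiableOn.eq_zero_on_line_of_frequently {B : Set E} (hG : DifferentiableOn ℂ G B)
    (hBo : IsOpen B) (hBc : Convex ℝ B) {a b : E} (ha : a ∈ B)
    (hfreq : ∃ᶠ c in 𝓝[≠] (0 : ℂ), G (a + c • b) = 0) {c : ℂ} (hc : a + c • b ∈ B) :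
    G (a + c • b) = 0 := by
  set L : ℂ → E := fun c => a + c • b
  have hLc : Convex ℝ (L ⁻¹' B) := by
    intro x hx y hy s t hs ht hst
    have hL : L (s • x + t • y) = s • L x + t • L y := by
      simp only [L, add_smul, smul_assoc, smul_add]
      rw [add_add_add_comm, ← add_smul, hst, one_smul]
    simpa only [mem_preimage, hL] using hBc hx hy hs ht hst
  have hL : DifferentiableOn ℂ L (L ⁻¹' B) := by fun_prop
  have hana : AnalyticOnNhd ℂ (G ∘ L) (L ⁻¹' B) :=
    (hG.comp hL (fun _ h => h)).analyticOnNhd (hBo.preimage (by fun_prop))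
  exact hana.eqOn_zero_of_preconnected_of_frequently_eq_zero hLc.isPreconnected
    (by simpa [L] using ha) hfreq hc

theorem DifferentiableOn.eqOn_zero_of_preconnected_of_eventuallyEq_zero {U : Set E}
    (hG : DifferentiableOn ℂ G U) (hUo : IsOpen U) (hU : IsPreconnected U) {z₀ : E}
    (hz₀ : z₀ ∈ U) (hG₀ : G =ᶠ[𝓝 z₀] 0) : EqOn G 0 U := by
  suffices hUS : U ⊆ {z | G =ᶠ[𝓝 z] 0} from fun z hz => (hUS hz).self_of_nhds
  refine hU.subset_of_closure_inter_subset isOpen_setOfPred_eventually_nhds ⟨z₀, hz₀, hG₀⟩ ?_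
  rintro z ⟨hzS, hzU⟩
  obtain ⟨r, hr, hrU⟩ := Metric.isOpen_iff.mp hUo z hzU
  obtain ⟨z', hz'S, hz'r⟩ := Metric.mem_closure_iff.mp hzS r hr
  refine eventually_of_mem (ball_mem_nhds z hr) fun w hw => ?_
  -- `G` vanishes near `z'`, hence along the complex line through `z'` and `w`.
  have hline : Tendsto (fun c : ℂ => z' + c • (w - z')) (𝓝[≠] 0) (𝓝 z') := by
    have hcont : Continuous fun c : ℂ => z' + c • (w - z') := by fun_prop
    simpa using tendsto_nhdsWithin_of_tendsto_nhds (hcont.tendsto 0)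
  have := (hG.mono hrU).eq_zero_on_line_of_frequently isOpen_ball (convex_ball z r)
    (mem_ball'.mpr hz'r) (hline.eventually hz'S).frequently (c := 1) (by simpa using hw)
  simpa using this

theorem DifferentiableOn.eqOn_zero_ball_of_eq_zero_on_reals {d : ℕ} {G : (Fin d → ℂ) → F}
    {x₀ : Fin d → ℂ} {r : ℝ} (hG : DifferentiableOn ℂ G (ball x₀ r)) (hx₀ : ∀ ℓ, (x₀ ℓ).im = 0)
    (hreal : ∀ z ∈ ball x₀ r, (∀ ℓ, (z ℓ).im = 0) → G z = 0) : EqOn G 0 (ball x₀ r) := by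
  intro w hw
  set a : Fin d → ℂ := fun ℓ => ((w ℓ).re : ℂ)
  set b : Fin d → ℂ := fun ℓ => ((w ℓ).im : ℂ)
  have hw_eq : w = a + Complex.I • b := funext fun ℓ => by
    simpa [a, b, mul_comm] using (Complex.re_add_im (w ℓ)).symm
  have ha : a ∈ ball x₀ r := by
    refine lt_of_le_of_lt ((dist_pi_le_iff dist_nonneg).mpr fun ℓ => ?_) hw
    rw [dist_eq_norm]
    calc ‖a ℓ - x₀ ℓ‖ = |(w ℓ - x₀ ℓ).re| := by
          rw [← Complex.re_add_im (x₀ ℓ), hx₀]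
          simp [a, ← Complex.ofReal_sub, Complex.norm_real]
      _ ≤ ‖w ℓ - x₀ ℓ‖ := Complex.abs_re_le_norm _
      _ ≤ _ := by rw [← dist_eq_norm]; exact dist_le_pi_dist w x₀ ℓ
  have hnear : ∀ᶠ c in 𝓝[≠] (0 : ℂ), a + c • b ∈ ball x₀ r := by
    have hcont : Continuous fun c : ℂ => a + c • b := by fun_prop
    exact nhdsWithin_le_nhds (hcont.continuousAt.preimage_mem_nhds
      (by simpa using isOpen_ball.mem_nhds ha))
  have hfreq : ∃ᶠ c in 𝓝[≠] (0 : ℂ), G (a + c • b) = 0 := by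
    refine (Complex.frequently_im_eq_zero_nhdsNE.and_eventually hnear).mono ?_
    rintro c ⟨hc, hmem⟩
    exact hreal _ hmem fun ℓ => by simp [a, b, hc]
  rw [hw_eq] at hw ⊢
  exact hG.eq_zero_on_line_of_frequently isOpen_ball (convex_ball _ _) ha hfreq hw

theorem DifferentiableOn.eq_zero_along_path {d : ℕ} {G : (Fin d → ℂ) → F} {U : Set (Fin d → ℂ)}
    (hUo : IsOpen U) (hG : DifferentiableOn ℂ G U)
    (hreal : ∀ z ∈ U, (∀ ℓ, (z ℓ).im = 0) → G z = 0) {γ : ℝ → Fin d → ℂ}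
    (hγ : ContinuousOn γ (Icc 0 1)) (hγ₀ : ∀ ℓ, (γ 0 ℓ).im = 0)
    (hγU : ∀ t ∈ Icc (0 : ℝ) 1, γ t ∈ U) : ∀ t ∈ Icc (0 : ℝ) 1, G (γ t) = 0 := by
  have h₀ : (0 : ℝ) ∈ Icc 0 1 := ⟨le_rfl, zero_le_one⟩
  have hpath : γ '' Icc 0 1 ⊆ connectedComponentIn U (γ 0) :=
    (isPreconnected_Icc.image γ hγ).subset_connectedComponentIn (mem_image_of_mem γ h₀)
      (image_subset_iff.mpr hγU)
  obtain ⟨r, hr, hrU⟩ := Metric.isOpen_iff.mp hUo _ (hγU 0 h₀)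
  have hnear : G =ᶠ[𝓝 (γ 0)] 0 := eventually_of_mem (ball_mem_nhds _ hr)
    ((hG.mono hrU).eqOn_zero_ball_of_eq_zero_on_reals hγ₀ fun z hz => hreal z (hrU hz))
  have hzero := DifferentiableOn.eqOn_zero_of_preconnected_of_eventuallyEq_zero
    (hG.mono (connectedComponentIn_subset _ _))
    hUo.connectedComponentIn isPreconnected_connectedComponentIn
    (mem_connectedComponentIn (hγU 0 h₀)) hnear
  exact fun t ht => hzero (hpath (mem_image_of_mem γ ht))

end IdentityPrinciple

section ComplexLinear

variable {d : ℕ} {F : Type*} [NormedAddCommGroup F] [NormedSpace ℂ F]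

theorem ContinuousLinearMap.exists_restrictScalars_eq_of_single (D : (Fin d → ℂ) →L[ℝ] F)
    (hD : ∀ j, D (Pi.single j Complex.I) = Complex.I • D (Pi.single j 1)) :
    ∃ L : (Fin d → ℂ) →L[ℂ] F, L.restrictScalars ℝ = D := by
  classical
  set L : (Fin d → ℂ) →L[ℂ] F := ∑ j, (ContinuousLinearMap.proj j).smulRight (D (Pi.single j 1))
  have hL : ∀ j (c : ℂ), L (Pi.single j c) = c • D (Pi.single j 1) := by
    intro j c
    simp [L, Pi.single_apply]
  refine ⟨L, ContinuousLinearMap.coe_injective <|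
    (Pi.basis fun _ : Fin d => Complex.basisOneI).ext fun ⟨j, k⟩ => ?_⟩
  fin_cases k
  · simpa using hL j 1
  · simpa [hD] using hL j Complex.I

end ComplexLinear

section CauchyRiemann

variable {d : ℕ} {F : Type*} [NormedAddCommGroup F] [NormedSpace ℝ F] {K : F →L[ℝ] F}

def complexFunctional (K : F →L[ℝ] F) (ℓ : F →L[ℝ] ℝ) : F →L[ℝ] ℂ :=
  Complex.ofRealCLM ∘L ℓ - Complex.I • (Complex.ofRealCLM ∘L ℓ ∘L K)

@[simp]
theorem complexFunctional_apply_re (ℓ : F →L[ℝ] ℝ) (v : F) :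
    (complexFunctional K ℓ v).re = ℓ v := by
  simp [complexFunctional]

theorem complexFunctional_apply_clm (hK : K * K = -1) (ℓ : F →L[ℝ] ℝ) (v : F) :
    complexFunctional K ℓ (K v) = Complex.I • complexFunctional K ℓ v := by
  have hKK : K (K v) = -v := congr($hK v)
  apply Complex.ext <;> simp [complexFunctional, hKK]

theorem eq_clm_apply_of_add_clm_apply_eq_zero (hK : K * K = -1) {x y : F} (h : x + K y = 0) :
    y = K x := by
  have hKK : K (K y) = -y := congr($hK y)
  have := congr(K $h)
  rw [map_add, hKK, map_zero, add_neg_eq_zero] at this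
  exact this.symm

def reIm (d : ℕ) : (Fin d → ℂ) →L[ℝ] (Fin d → ℝ) × (Fin d → ℝ) :=
  (ContinuousLinearMap.pi fun j => Complex.reCLM ∘L ContinuousLinearMap.proj j).prod
    (ContinuousLinearMap.pi fun j => Complex.imCLM ∘L ContinuousLinearMap.proj j)

@[simp]
theorem reIm_apply (z : Fin d → ℂ) : reIm d z = (fun j => (z j).re, fun j => (z j).im) := rfl

theorem reIm_single_one (j : Fin d) : reIm d (Pi.single j 1) = ex d j := by
  ext k <;> simp [ex, Pi.single_apply, apply_ite Complex.re, apply_ite Complex.im]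

theorem reIm_single_I (j : Fin d) : reIm d (Pi.single j Complex.I) = ey d j := by
  ext k <;> simp [ey, Pi.single_apply, apply_ite Complex.re, apply_ite Complex.im]

def CauchyRiemannOn (K : F →L[ℝ] F) (u : (Fin d → ℝ) × (Fin d → ℝ) → F)
    (s : Set ((Fin d → ℝ) × (Fin d → ℝ))) : Prop :=
  DifferentiableOn ℝ u s ∧ ∀ p ∈ s, ∀ ℓ, fderiv ℝ u p (ex d ℓ) + K (fderiv ℝ u p (ey d ℓ)) = 0

variable {u v : (Fin d → ℝ) × (Fin d → ℝ) → F} {s t : Set ((Fin d → ℝ) × (Fin d → ℝ))}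

theorem CauchyRiemannOn.mono (hu : CauchyRiemannOn K u s) (hts : t ⊆ s) :
    CauchyRiemannOn K u t :=
  ⟨hu.1.mono hts, fun p hp => hu.2 p (hts hp)⟩

theorem CauchyRiemannOn.sub (hs : IsOpen s) (hu : CauchyRiemannOn K u s)
    (hv : CauchyRiemannOn K v s) : CauchyRiemannOn K (u - v) s := by
  refine ⟨hu.1.sub hv.1, fun p hp ℓ => ?_⟩
  rw [fderiv_sub (hu.1.differentiableAt (hs.mem_nhds hp)) (hv.1.differentiableAt (hs.mem_nhds hp))]
  have hu' := hu.2 p hp ℓ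
  have hv' := hv.2 p hp ℓ
  simp only [sub_apply, map_sub]
  rw [sub_add_sub_comm, hu', hv', sub_self]

theorem CauchyRiemannOn.differentiableOn_complex (hs : IsOpen s) (hK : K * K = -1)
    (hu : CauchyRiemannOn K u s) {G : Type*} [NormedAddCommGroup G] [NormedSpace ℂ G]
    (ψ : F →L[ℝ] G) (hψ : ∀ v, ψ (K v) = Complex.I • ψ v) :
    DifferentiableOn ℂ (ψ ∘ u ∘ reIm d) (reIm d ⁻¹' s) := by
  intro z hz
  have hD := (hu.1.differentiableAt (hs.mem_nhds hz)).hasFDerivAt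
  have hDy : ∀ j, fderiv ℝ u (reIm d z) (ey d j) = K (fderiv ℝ u (reIm d z) (ex d j)) :=
    fun j => eq_clm_apply_of_add_clm_apply_eq_zero hK (hu.2 _ hz j)
  obtain ⟨L, hL⟩ := (ψ ∘L fderiv ℝ u (reIm d z) ∘L reIm d).exists_restrictScalars_eq_of_single
    fun j => by simp only [ContinuousLinearMap.comp_apply, reIm_single_one, reIm_single_I, hDy, hψ]
  exact (hasFDerivAt_of_restrictScalars ℝ ((ψ.hasFDerivAt.comp _ hD).comp z
    (reIm d).hasFDerivAt) hL).differentiableAt.differentiableWithinAt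

theorem CauchyRiemannOn.eq_zero_along_path (hs : IsOpen s) (hK : K * K = -1)
    (hu : CauchyRiemannOn K u s) (hreal : ∀ x, (x, 0) ∈ s → u (x, 0) = 0)
    {γ : ℝ → Fin d → ℂ} (hγ : ContinuousOn γ (Icc 0 1)) (hγ₀ : ∀ ℓ, (γ 0 ℓ).im = 0)
    (hγs : ∀ t ∈ Icc (0 : ℝ) 1, reIm d (γ t) ∈ s) : ∀ t ∈ Icc (0 : ℝ) 1, u (reIm d (γ t)) = 0 := by
  intro t ht
  by_contra hne
  obtain ⟨ℓ, hℓ⟩ := SeparatingDual.exists_ne_zero (R := ℝ) hne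
  have hreal' : ∀ z ∈ reIm d ⁻¹' s, (∀ j, (z j).im = 0) →
      (complexFunctional K ℓ ∘ u ∘ reIm d) z = 0 := by
    intro z hz hzim
    have hz0 : reIm d z = (fun j => (z j).re, 0) := by ext <;> simp [hzim]
    rw [mem_preimage, hz0] at hz
    simp [hz0, hreal _ hz]
  have := DifferentiableOn.eq_zero_along_path (hs.preimage (reIm d).continuous)
    (hu.differentiableOn_complex hs hK _ (complexFunctional_apply_clm hK ℓ)) hreal' hγ hγ₀ hγs t ht
  exact hℓ (by simpa using congr(Complex.re $this))

end CauchyRiemann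

theorem fderiv_add_clm_comp_apply {E F : Type*} [NormedAddCommGroup E] [NormedSpace ℝ E]
    [NormedAddCommGroup F] [NormedSpace ℝ F] {a b : E → F} {p : E} (ha : DifferentiableAt ℝ a p)
    (hb : DifferentiableAt ℝ b p) (K : F →L[ℝ] F) (v : E) :
    fderiv ℝ (fun q => a q + K (b q)) p v = fderiv ℝ a p v + K (fderiv ℝ b p v) := by
  have h : HasFDerivAt (fun q => a q + K (b q)) (fderiv ℝ a p + K ∘L fderiv ℝ b p) p :=
    ha.hasFDerivAt.add (K.hasFDerivAt.comp p hb.hasFDerivAt)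
  rw [h.fderiv]
  rfl

section Representation

variable {d : ℕ} {F : Type*} [NormedAddCommGroup F] [NormedSpace ℝ F] {J₁ J₂ K : F →L[ℝ] F}
  {s : Set ((Fin d → ℝ) × (Fin d → ℝ))}

theorem eq_zero_of_add_clm_apply_eq_zero (hinj : Function.Injective (J₁ - J₂)) {x y : F}
    (h₁ : x + J₁ y = 0) (h₂ : x + J₂ y = 0) : x = 0 ∧ y = 0 := by
  have hy : y = 0 := hinj <| by
    rw [map_zero, sub_apply, ← add_sub_add_left_eq_sub _ _ x, h₁, h₂, sub_self]
  exact ⟨by simpa [hy] using h₁, hy⟩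

theorem CauchyRiemannOn.add_clm_of_two_slices {a b : (Fin d → ℝ) × (Fin d → ℝ) → F} (hs : IsOpen s)
    (ha : DifferentiableOn ℝ a s) (hb : DifferentiableOn ℝ b s) (hJ₁ : J₁ * J₁ = -1)
    (hJ₂ : J₂ * J₂ = -1) (hK : K * K = -1) (hinj : Function.Injective (J₁ - J₂))
    (h₁ : CauchyRiemannOn J₁ (fun p => a p + J₁ (b p)) s)
    (h₂ : CauchyRiemannOn J₂ (fun p => a p + J₂ (b p)) s) :
    CauchyRiemannOn K (fun p => a p + K (b p)) s := by
  refine ⟨ha.add (K.differentiable.comp_differentiableOn hb), fun p hp ℓ => ?_⟩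
  have had := ha.differentiableAt (hs.mem_nhds hp)
  have hbd := hb.differentiableAt (hs.mem_nhds hp)
  have hsplit : ∀ J : F →L[ℝ] F, J * J = -1 →
      fderiv ℝ (fun q => a q + J (b q)) p (ex d ℓ) +
          J (fderiv ℝ (fun q => a q + J (b q)) p (ey d ℓ)) =
        (fderiv ℝ a p (ex d ℓ) - fderiv ℝ b p (ey d ℓ)) +
          J (fderiv ℝ b p (ex d ℓ) + fderiv ℝ a p (ey d ℓ)) := by
    intro J hJ
    have hJJ : J (J (fderiv ℝ b p (ey d ℓ))) = -fderiv ℝ b p (ey d ℓ) := congr($hJ _)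
    simp only [fderiv_add_clm_comp_apply had hbd, map_add, hJJ]
    abel
  obtain ⟨hx, hy⟩ := eq_zero_of_add_clm_apply_eq_zero hinj
    ((hsplit J₁ hJ₁).symm.trans (h₁.2 p hp ℓ)) ((hsplit J₂ hJ₂).symm.trans (h₂.2 p hp ℓ))
  rw [hsplit K hK, hx, hy, map_zero, add_zero]

theorem CauchyRiemannOn.representation {f₁ f₂ : (Fin d → ℝ) × (Fin d → ℝ) → F} {B : F →L[ℝ] F}
    (hs : IsOpen s) (hJ₁ : J₁ * J₁ = -1) (hJ₂ : J₂ * J₂ = -1) (hK : K * K = -1)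
    (hAB : (J₁ - J₂) * B = 1) (hBA : B * (J₁ - J₂) = 1)
    (h₁ : CauchyRiemannOn J₁ f₁ s) (h₂ : CauchyRiemannOn J₂ f₂ s) :
    CauchyRiemannOn K (fun p => (K - J₂) (B (f₁ p)) - (K - J₁) (B (f₂ p))) s := by
  have hAB' : ∀ v, J₁ (B v) - J₂ (B v) = v := fun v => congr($hAB v)
  set b := fun p => B (f₁ p - f₂ p)
  set a := fun p => f₁ p - J₁ (b p)
  have hrep : ∀ J : F →L[ℝ] F,
      (fun p => (J - J₂) (B (f₁ p)) - (J - J₁) (B (f₂ p))) = fun p => a p + J (b p) := by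
    intro J
    funext p
    have e := hAB' (f₁ p)
    simp only [a, b, sub_apply, map_sub]
    rw [← sub_eq_zero] at e ⊢
    rw [← e]
    abel
  have hinj : Function.Injective (J₁ - J₂) := Function.LeftInverse.injective (g := B)
    fun v => congr($hBA v)
  have hb : DifferentiableOn ℝ b s := B.differentiable.comp_differentiableOn (h₁.1.sub h₂.1)
  have ha : DifferentiableOn ℝ a s := h₁.1.sub (J₁.differentiable.comp_differentiableOn hb)
  rw [hrep]
  refine CauchyRiemannOn.add_clm_of_two_slices hs ha hb hJ₁ hJ₂ hK hinj ?_ ?_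
  · simpa [← hrep, hAB'] using h₁
  · simpa [← hrep, hAB'] using h₂

end Representation

section Slices

variable {n d : ℕ}

theorem continuous_Phi (K : EndE n) : Continuous (Phi n d K) := by
  unfold Phi
  fun_prop

theorem isOpen_preimage_Phi {𝒞 : Set (EndE n)} {Ω : Set (Fin d → EndE n)}
    (hΩ : SliceOpen n d 𝒞 Ω) {K : EndE n} (hK : K ∈ 𝒞) : IsOpen (Phi n d K ⁻¹' Ω) := by
  obtain ⟨U, hU, hΩU⟩ := hΩ.2 K hK
  have hslice : ∀ p, Phi n d K p ∈ CId n d K := fun p ℓ => ⟨_, _, rfl⟩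
  have hpre : Phi n d K ⁻¹' Ω = Phi n d K ⁻¹' U := by
    ext p
    simpa [hslice p] using Set.ext_iff.mp hΩU (Phi n d K p)
  exact hpre ▸ hU.preimage (continuous_Phi K)

theorem Phi_mk_zero_eq (K K' : EndE n) (x : Fin d → ℝ) : Phi n d K (x, 0) = Phi n d K' (x, 0) := by
  funext ℓ
  ext v
  simp [Phi]

end Slices

theorem classical_path_representation_formula_general (n d : ℕ)
    (𝒞 : Set (EndE n)) (hcs : 𝒞 ⊆ CS n)
    (Ω : Set (Fin d → EndE n)) (hΩ : SliceOpen n d 𝒞 Ω)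
    (f : (Fin d → EndE n) → V n) (hf : WSRegular n d 𝒞 Ω f)
    (γ : ℝ → Fin d → ℂ) (hγ : IsPath0 d γ)
    (I J₁ J₂ : EndE n) (hI : I ∈ CPath n d 𝒞 Ω γ)
    (hJ₁ : J₁ ∈ CPath n d 𝒞 Ω γ) (hJ₂ : J₂ ∈ CPath n d 𝒞 Ω γ)
    (hinv : IsUnit (J₁ - J₂)) :
    ∀ t ∈ Set.Icc (0:ℝ) 1,
      f (Psi n d I (γ t)) =
        (I - J₂) (Ring.inverse (J₁ - J₂) (f (Psi n d J₁ (γ t)))) -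
        (I - J₁) (Ring.inverse (J₁ - J₂) (f (Psi n d J₂ (γ t)))) := by
  obtain ⟨hI𝒞, hIγ⟩ := hI
  obtain ⟨hJ₁𝒞, hJ₁γ⟩ := hJ₁
  obtain ⟨hJ₂𝒞, hJ₂γ⟩ := hJ₂
  set B := Ring.inverse (J₁ - J₂)
  set s := Phi n d I ⁻¹' Ω ∩ Phi n d J₁ ⁻¹' Ω ∩ Phi n d J₂ ⁻¹' Ω
  have hs : IsOpen s := ((isOpen_preimage_Phi hΩ hI𝒞).inter
    (isOpen_preimage_Phi hΩ hJ₁𝒞)).inter (isOpen_preimage_Phi hΩ hJ₂𝒞)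
  have hfI : CauchyRiemannOn I (f ∘ Phi n d I) s :=
    CauchyRiemannOn.mono (hf I hI𝒞) fun _ hp => hp.1.1
  have hf₁ : CauchyRiemannOn J₁ (f ∘ Phi n d J₁) s :=
    CauchyRiemannOn.mono (hf J₁ hJ₁𝒞) fun _ hp => hp.1.2
  have hf₂ : CauchyRiemannOn J₂ (f ∘ Phi n d J₂) s :=
    CauchyRiemannOn.mono (hf J₂ hJ₂𝒞) fun _ hp => hp.2
  have hrep := CauchyRiemannOn.representation (K := I) hs (hcs hJ₁𝒞) (hcs hJ₂𝒞) (hcs hI𝒞)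
    (Ring.mul_inverse_cancel _ hinv) (Ring.inverse_mul_cancel _ hinv) hf₁ hf₂
  -- on `ℝ^d` all slices meet, and there both sides reduce to `f`
  have hreal : ∀ x, (x, 0) ∈ s → (f ∘ Phi n d I - fun p => (I - J₂) (B (f (Phi n d J₁ p))) -
      (I - J₁) (B (f (Phi n d J₂ p)))) (x, 0) = 0 := by
    intro x _
    have hAB : (J₁ - J₂) (B (f (Phi n d I (x, 0)))) = f (Phi n d I (x, 0)) :=
      congr($(Ring.mul_inverse_cancel _ hinv) _)
    simp only [Pi.sub_apply, Function.comp_apply, Phi_mk_zero_eq J₁ I, Phi_mk_zero_eq J₂ I]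
    rw [← sub_apply, sub_sub_sub_cancel_left, hAB, sub_self]
  intro t ht
  exact sub_eq_zero.mp <| (hfI.sub hs hrep).eq_zero_along_path hs (hcs hI𝒞) hreal hγ.1 hγ.2
    (fun t ht => ⟨⟨hIγ t ht, hJ₁γ t ht⟩, hJ₂γ t ht⟩) t ht

/-- (Classical Path-representation Formula) For I, J₁, J₂ ∈ 𝒞(γ, Ω) with J₁ − J₂
invertible and f weak slice regular on the slice-open set Ω:
f(γ^I(t)) = (I − J₂)((J₁ − J₂)⁻¹ f(γ^{J₁}(t))) − (I − J₁)((J₁ − J₂)⁻¹ f(γ^{J₂}(t))). -/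
theorem classical_path_representation_formula (n d : ℕ) (hn : 1 ≤ n) (hd : 1 ≤ d)
    (𝒞 : Set (EndE n)) (h𝒞 : 𝒞.Nonempty) (hsym : ∀ I ∈ 𝒞, -I ∈ 𝒞) (hcs : 𝒞 ⊆ CS n)
    (Ω : Set (Fin d → EndE n)) (hΩ : SliceOpen n d 𝒞 Ω)
    (f : (Fin d → EndE n) → V n) (hf : WSRegular n d 𝒞 Ω f)
    (γ : ℝ → Fin d → ℂ) (hγ : IsPath0 d γ)
    (I J₁ J₂ : EndE n) (hI : I ∈ CPath n d 𝒞 Ω γ)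
    (hJ₁ : J₁ ∈ CPath n d 𝒞 Ω γ) (hJ₂ : J₂ ∈ CPath n d 𝒞 Ω γ)
    (hinv : IsUnit (J₁ - J₂)) :
    ∀ t ∈ Set.Icc (0:ℝ) 1,
      f (Psi n d I (γ t)) =
        (I - J₂) (Ring.inverse (J₁ - J₂) (f (Psi n d J₁ (γ t)))) -
        (I - J₁) (Ring.inverse (J₁ - J₂) (f (Psi n d J₂ (γ t)))) :=
  classical_path_representation_formula_general n d 𝒞 hcs Ω hΩ f hf γ hγ I J₁ J₂ hI hJ₁ hJ₂ hinv
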